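/- (Theorem 4.8) For every n ≥ 0, ∑_{k=0}^{n} 2^k · s_{n,k} = h_{n+1}, where h is the sequence defined by h_0 = 0, h_1 = 1, h_{n+2} = 3·h_{n+1} + h_n. -/

import Mathlib

/-!
Reading `s_{n,k}` along the antidiagonal `i + l = n` gives `s_{n,k} = ∑ C(i,k) C(i-k,l)`.
Trinomial revision `C(i,k) C(i-k,l) = C(i,l) C(i-l,k)` and the binomial theorem then collapse
`∑_k 2^k s_{n,k}` to `∑_{i+l=n} C(i,l) 3^(i-l)`. This is the classical closed form of the Lucas
sequence `u_{n+2} = 3 u_{n+1} + u_n`, as Pascal's rule shows.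
-/

/-- `s_{n,k} = ∑_{j=0}^{n-k} C(k+j,k) * C(j, n-j-k)` for `k ≤ n`, and `0` for `k > n`. -/
def snk (n k : ℕ) : ℕ :=
  if k ≤ n then
    ∑ j ∈ Finset.range (n - k + 1), Nat.choose (k + j) k * Nat.choose j (n - j - k)
  else 0

/-- The sequence A006190: `h_0 = 0`, `h_1 = 1`, `h_{n+2} = 3 h_{n+1} + h_n`. -/
def hseq : ℕ → ℕ
  | 0 => 0
  | 1 => 1
  | n + 2 => 3 * hseq (n + 1) + hseq n

open Finset

theorem Nat.choose_mul_choose_sub_comm (N k m : ℕ) :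
    N.choose k * (N - k).choose m = N.choose m * (N - m).choose k :=
  calc N.choose k * (N - k).choose m = N.choose (k + m) * (k + m).choose k := by
        rw [Nat.choose_mul (Nat.le_add_right k m), Nat.add_sub_cancel_left]
    _ = N.choose (k + m) * (k + m).choose m := by rw [Nat.choose_symm_add]
    _ = N.choose m * (N - m).choose k := by
        rw [Nat.choose_mul (Nat.le_add_left m k), Nat.add_sub_cancel]

section CommSemiring

variable {R : Type*} [CommSemiring R]

theorem sum_range_pow_mul_choose_mul_choose_sub (x : R) {N M : ℕ} (m : ℕ) (hNM : N ≤ M) :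
    ∑ k ∈ range (M + 1), x ^ k * (N.choose k * (N - k).choose m : R)
      = N.choose m * (x + 1) ^ (N - m) := by
  have hvanish : ∀ k ∈ range (M + 1), k ∉ range (N - m + 1) →
      x ^ k * ((N.choose m * (N - m).choose k : ℕ) : R) = 0 := by
    intro k _ hk
    rw [Nat.choose_eq_zero_of_lt (n := N - m) (by simpa using hk), mul_zero, Nat.cast_zero,
      mul_zero]
  simp_rw [← Nat.cast_mul, Nat.choose_mul_choose_sub_comm N _ m]
  rw [← sum_subset (range_subset_range.mpr (by omega)) hvanish, add_pow, mul_sum]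
  refine sum_congr rfl fun k _ => ?_
  push_cast
  ring

def antidiagonalChooseSum (a b : R) (n : ℕ) : R :=
  ∑ p ∈ antidiagonal n, (p.1.choose p.2 : R) * a ^ (p.1 - p.2) * b ^ p.2

theorem antidiagonalChooseSum_add_two (a b : R) (n : ℕ) :
    antidiagonalChooseSum a b (n + 2)
      = a * antidiagonalChooseSum a b (n + 1) + b * antidiagonalChooseSum a b n := by
  have hshift : ∀ i j : ℕ,
      a * ((i.choose (j + 1) : R) * a ^ (i - (j + 1))) = (i.choose (j + 1) : R) * a ^ (i - j) := by
    intro i j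
    rcases lt_or_ge j i with h | h
    · rw [show i - j = i - (j + 1) + 1 by omega, pow_succ]; ring
    · rw [Nat.choose_eq_zero_of_lt (by omega)]; simp
  have hD2 : antidiagonalChooseSum a b (n + 2) = a ^ (n + 2) + ∑ p ∈ antidiagonal n,
      ((p.1.choose p.2 : R) + p.1.choose (p.2 + 1)) * a ^ (p.1 - p.2) * b ^ (p.2 + 1) := by
    rw [antidiagonalChooseSum, Nat.sum_antidiagonal_succ, Nat.sum_antidiagonal_succ']
    simp [Nat.choose_succ_succ']
  have hD1 : antidiagonalChooseSum a b (n + 1) = a ^ (n + 1) + ∑ p ∈ antidiagonal n,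
      (p.1.choose (p.2 + 1) : R) * a ^ (p.1 - (p.2 + 1)) * b ^ (p.2 + 1) := by
    rw [antidiagonalChooseSum, Nat.sum_antidiagonal_succ']
    simp
  rw [hD2, hD1, antidiagonalChooseSum, mul_add, mul_sum, mul_sum, ← pow_succ', add_assoc,
    ← sum_add_distrib]
  congr 1
  refine sum_congr rfl fun p _ => ?_
  rw [← mul_assoc a, hshift]
  ring

end CommSemiring

theorem snk_eq_sum_antidiagonal (n k : ℕ) :
    snk n k = ∑ p ∈ antidiagonal n, p.1.choose k * (p.1 - k).choose p.2 := by
  rw [Nat.sum_antidiagonal_eq_sum_range_succ (fun i l => i.choose k * (i - k).choose l), snk]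
  split_ifs with hkn
  · have hlow : ∑ i ∈ range k, i.choose k * (i - k).choose (n - i) = 0 :=
      sum_eq_zero fun i hi => by rw [Nat.choose_eq_zero_of_lt (mem_range.mp hi), zero_mul]
    rw [show n.succ = k + (n - k + 1) by omega, sum_range_add _ k, hlow, zero_add]
    refine sum_congr rfl fun j _ => ?_
    rw [Nat.add_sub_cancel_left, Nat.sub_add_eq, Nat.sub_right_comm]
  · refine (sum_eq_zero fun i hi => ?_).symm
    rw [Nat.choose_eq_zero_of_lt (by rw [mem_range] at hi; omega), zero_mul]

theorem hseq_succ_eq_antidiagonalChooseSum (n : ℕ) :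
    hseq (n + 1) = antidiagonalChooseSum 3 1 n := by
  induction n using Nat.twoStepInduction with
  | zero => rfl
  | one => rfl
  | more n ih₀ ih₁ =>
    rw [antidiagonalChooseSum_add_two, ← ih₀, ← ih₁, one_mul]
    rfl

/-- **Theorem 4.8.** `∑_{k=0}^n 2^k s_{n,k} = h_{n+1}`. -/
theorem sum_two_pow_snk_eq_hseq (n : ℕ) :
    ∑ k ∈ Finset.range (n + 1), 2 ^ k * snk n k = hseq (n + 1) :=
  calc ∑ k ∈ range (n + 1), 2 ^ k * snk n k
      = ∑ p ∈ antidiagonal n, ∑ k ∈ range (n + 1),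
          2 ^ k * (p.1.choose k * (p.1 - k).choose p.2) := by
        simp_rw [snk_eq_sum_antidiagonal, mul_sum]
        exact sum_comm
    _ = ∑ p ∈ antidiagonal n, p.1.choose p.2 * 3 ^ (p.1 - p.2) := sum_congr rfl fun p hp =>
        sum_range_pow_mul_choose_mul_choose_sub 2 p.2 (HasAntidiagonal.antidiagonal.fst_le hp)
    _ = hseq (n + 1) := by simp [hseq_succ_eq_antidiagonalChooseSum, antidiagonalChooseSum]
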